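/- arXiv:1106.0454 — 5 statements merged into one kernel-verified Lean document; each statement's English description precedes it below -/
import Mathlib

section
/- Let n ≥ 1 and k ≥ 1 be integers. Let A and B be n×n complex matrices such that A^k = 0, B^k = 0, the row vector eₙᵀ A^{k−1} is nonzero (where eₙᵀ = (0,…,0,1)), and A and B agree in all columns except possibly the last one (i.e. A_{ij} = B_{ij} for all i and all j < n). Then A = B. (In particular, on the set of n×n complex matrices X with X^k = 0 and eₙᵀ X^{k−1} ≠ 0, the map deleting the last column is injective.) -/
/-!
Write `B = A + w e_Nᵀ`, where `w` is the difference of the last columns. The noncommutative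
telescoping identity gives `0 = B ^ k - A ^ k = ∑_{i < k} (B ^ (k - 1 - i) w) (e_Nᵀ A ^ i)`.
Since `e_Nᵀ A ^ (k - 1) ≠ 0` and `e_Nᵀ A ^ k = 0`, the rows `e_Nᵀ A ^ i` (`i < k`) are linearly
independent, so every column coefficient vanishes; the one for `i = k - 1` is `w` itself.
-/

open Finset Matrix

theorem sum_range_pow_mul_sub_mul_pow {R : Type*} [Ring R] (a b : R) (m : ℕ) :
    ∑ i ∈ range m, b ^ (m - 1 - i) * (b - a) * a ^ i = b ^ m - a ^ m := by
  induction m with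
  | zero => simp
  | succ m ih =>
    rw [sum_range_succ', Nat.add_sub_cancel, Nat.sub_zero, pow_zero, mul_one]
    have hshift : ∀ i ∈ range m,
        b ^ (m - (i + 1)) * (b - a) * a ^ (i + 1) = b ^ (m - 1 - i) * (b - a) * a ^ i * a := by
      intro i _
      rw [pow_succ, ← mul_assoc, Nat.sub_sub, Nat.add_comm 1]
    rw [sum_congr rfl hshift, ← sum_mul, ih, pow_succ, pow_succ]
    noncomm_ring

theorem Module.End.linearIndependent_pow_apply {R M : Type*} [Ring R] [IsDomain R]
    [AddCommGroup M] [Module R M] [Module.IsTorsionFree R M] {f : Module.End R M} {x : M}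
    {k : ℕ} (hk : (f ^ k) x = 0) (hx : (f ^ (k - 1)) x ≠ 0) :
    LinearIndependent R (fun i : Fin k => (f ^ (i : ℕ)) x) := by
  have pow_apply_pow_apply (s t : ℕ) : (f ^ s) ((f ^ t) x) = (f ^ (s + t)) x := by
    rw [pow_add, Module.End.mul_apply]
  have pow_apply_eq_zero {t : ℕ} (ht : k ≤ t) : (f ^ t) x = 0 := by
    rw [← Nat.sub_add_cancel ht, ← pow_apply_pow_apply, hk, map_zero]
  rw [Fintype.linearIndependent_iff]
  intro c hc
  suffices ∀ m (hm : m < k), c ⟨m, hm⟩ = 0 from fun i => this i i.2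
  intro m
  induction m using Nat.strong_induction_on with
  | _ m ih =>
    intro hm
    -- applying `f ^ (k - 1 - m)` kills the terms above `m`; those below vanish by induction
    have hsum := congrArg (f ^ (k - 1 - m)) hc
    rw [map_sum, map_zero, sum_eq_single ⟨m, hm⟩] at hsum
    · rwa [map_smul, pow_apply_pow_apply, show k - 1 - m + m = k - 1 by omega,
        smul_eq_zero_iff_left hx] at hsum
    · intro j _ hjm
      have hjm : (j : ℕ) ≠ m := fun h => hjm (Fin.ext h)
      rcases lt_or_gt_of_ne hjm with hlt | hgt
      · rw [ih j hlt j.2, zero_smul, map_zero]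
      · rw [map_smul, pow_apply_pow_apply, pow_apply_eq_zero (by omega), smul_zero]
    · simp

theorem Matrix.vecMulLinear_pow_apply {R n : Type*} [CommSemiring R] [Fintype n] [DecidableEq n]
    (A : Matrix n n R) (x : n → R) (i : ℕ) : (A.vecMulLinear ^ i) x = x ᵥ* A ^ i := by
  induction i with
  | zero => simp
  | succ i ih =>
    rw [pow_succ', Module.End.mul_apply, ih, vecMulLinear_apply, vecMul_vecMul, pow_succ]

theorem Matrix.eq_zero_of_sum_vecMulVec_eq_zero {R ι m n : Type*} [CommRing R] [Fintype ι]
    {c : ι → m → R} {u : ι → n → R} (hu : LinearIndependent R u)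
    (h : ∑ i, vecMulVec (c i) (u i) = 0) (i : ι) : c i = 0 := by
  funext r
  refine Fintype.linearIndependent_iff.mp hu (fun i => c i r) ?_ i
  funext j
  simpa [vecMulVec_apply, Matrix.sum_apply] using congrFun (congrFun h r) j

theorem Matrix.sub_eq_vecMulVec_single_of_eq_off_col {R m n : Type*} [Ring R] [DecidableEq n]
    {A B : Matrix m n R} {N : n} (h : ∀ i j, j ≠ N → A i j = B i j) :
    B - A = vecMulVec (B.col N - A.col N) (Pi.single N 1) := by
  ext i j
  by_cases hj : j = N
  · subst hj
    simp [vecMulVec_apply]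
  · simp [vecMulVec_apply, hj, h i j hj]

theorem Matrix.eq_of_pow_eq_zero_of_eq_off_col {R n : Type*} [CommRing R] [IsDomain R]
    [Fintype n] [DecidableEq n] {A B : Matrix n n R} {k : ℕ} (hA : A ^ k = 0) (hB : B ^ k = 0)
    {N : n} (hrow : (A ^ (k - 1)) N ≠ 0) (hcols : ∀ i j, j ≠ N → A i j = B i j) : A = B := by
  have hk : k ≠ 0 := by
    rintro rfl
    rw [pow_zero] at hA
    rw [Nat.zero_sub, pow_zero, hA] at hrow
    exact hrow rfl
  set v : n → R := Pi.single N 1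
  have hindep : LinearIndependent R (fun i : Fin k => v ᵥ* A ^ (i : ℕ)) := by
    simpa only [vecMulLinear_pow_apply] using
      Module.End.linearIndependent_pow_apply (f := A.vecMulLinear) (x := v)
        (by rw [vecMulLinear_pow_apply, hA, vecMul_zero])
        (by rwa [vecMulLinear_pow_apply, single_one_vecMul])
  have hdiff := sub_eq_vecMulVec_single_of_eq_off_col hcols
  have hsum : ∑ i : Fin k,
      vecMulVec (B ^ (k - 1 - i) *ᵥ (B.col N - A.col N)) (v ᵥ* A ^ (i : ℕ)) = 0 := by
    rw [Fin.sum_univ_eq_sum_range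
      (fun i => vecMulVec (B ^ (k - 1 - i) *ᵥ (B.col N - A.col N)) (v ᵥ* A ^ i))]
    calc _ = ∑ i ∈ range k, B ^ (k - 1 - i) * (B - A) * A ^ i :=
          sum_congr rfl fun i _ => by rw [hdiff, mul_vecMulVec, vecMulVec_mul]
      _ = 0 := by rw [sum_range_pow_mul_sub_mul_pow, hA, hB, sub_zero]
  have hcol := eq_zero_of_sum_vecMulVec_eq_zero hindep hsum ⟨k - 1, by omega⟩
  rw [Nat.sub_self, pow_zero, one_mulVec] at hcol
  rw [eq_comm, ← sub_eq_zero, hdiff, hcol, zero_vecMulVec]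

theorem stmt_0_general (n k : ℕ)
    (A B : Matrix (Fin (n + 1)) (Fin (n + 1)) ℂ)
    (hA : A ^ k = 0) (hB : B ^ k = 0)
    (hrow : (fun j => (A ^ (k - 1)) (Fin.last n) j) ≠ 0)
    (hcols : ∀ i j, j ≠ Fin.last n → A i j = B i j) :
    A = B :=
  eq_of_pow_eq_zero_of_eq_off_col hA hB hrow hcols

/-- Let `n ≥ 1`, `k ≥ 1`, and let `A`, `B` be `n × n` complex matrices
(here indexed by `Fin (n+1)`, so the actual size is `n+1 ≥ 1`) with `A ^ k = 0`, `B ^ k = 0`,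
the last row of `A ^ (k-1)` nonzero, and `A`, `B` agreeing in every column except possibly
the last.  Then `A = B`. -/
theorem stmt_0 (n k : ℕ) (hk : 1 ≤ k)
    (A B : Matrix (Fin (n + 1)) (Fin (n + 1)) ℂ)
    (hA : A ^ k = 0) (hB : B ^ k = 0)
    (hrow : (fun j => (A ^ (k - 1)) (Fin.last n) j) ≠ 0)
    (hcols : ∀ i j, j ≠ Fin.last n → A i j = B i j) :
    A = B :=
  stmt_0_general n k A B hA hB hrow hcols
end

section
/- Let A be a nilpotent n×n complex matrix, let v ∈ ℂⁿ be a column vector, and suppose that B = A + v eₙᵀ is also nilpotent. Then eₙᵀ Aⁱ v = 0 for every integer i ≥ 0. -/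
/-!
Over a reduced ring the reversed characteristic polynomial `det (1 - t M)` of a nilpotent matrix
is `1`. Applying this to `A` and to `B = A + v uᵀ`, the matrix determinant lemma gives
`1 = det (1 - t B) = 1 - t · uᵀ (1 - t A)⁻¹ v`, and `(1 - t A)⁻¹ = ∑ tᵏ Aᵏ`, so every
coefficient `uᵀ Aᵏ v` of `uᵀ (1 - t A)⁻¹ v` vanishes.
-/

open Polynomial

namespace Matrix

variable {n R : Type*} [Fintype n] [DecidableEq n] [CommRing R]

theorem det_add_vecMulVec {A : Matrix n n R} (hA : IsUnit A.det) (u v : n → R) :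
    (A + vecMulVec u v).det = A.det * (1 + v ⬝ᵥ A⁻¹ *ᵥ u) := by
  rw [vecMulVec_eq Unit, det_add_replicateCol_mul_replicateRow hA, Matrix.mul_assoc,
    ← replicateCol_mulVec, replicateRow_mul_replicateCol, det_unique (n := Unit)]
  rfl

theorem charpolyRev_eq_one_of_isNilpotent [IsReduced R] {M : Matrix n n R}
    (hM : IsNilpotent M) : M.charpolyRev = 1 := by
  have hcoeff := isUnit_iff_coeff_isUnit_isNilpotent.mp (isUnit_charpolyRev_of_isNilpotent hM)
  ext (_ | i)
  · simp [coeff_zero_eq_eval_zero]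
  · simpa [coeff_one] using (hcoeff.2 (i + 1) i.succ_ne_zero).eq_zero

theorem inv_one_sub_X_smul_map_C {M : Matrix n n R} {m : ℕ} (hM : M ^ m = 0) :
    (1 - (X : R[X]) • M.map C)⁻¹ = ∑ i ∈ Finset.range m, (X : R[X]) ^ i • (M ^ i).map C := by
  apply inv_eq_right_inv
  simp only [Matrix.map_pow, ← _root_.smul_pow]
  rw [mul_neg_geom_sum, _root_.smul_pow, ← Matrix.map_pow, hM, Matrix.map_zero _ (map_zero C),
    smul_zero, sub_zero]

theorem dotProduct_sum_X_pow_smul_map_C_mulVec (M : Matrix n n R) (u v : n → R) (m : ℕ) :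
    (C ∘ u) ⬝ᵥ (∑ i ∈ Finset.range m, (X : R[X]) ^ i • (M ^ i).map C) *ᵥ (C ∘ v)
      = ∑ i ∈ Finset.range m, C (u ⬝ᵥ (M ^ i) *ᵥ v) * X ^ i := by
  simp only [Matrix.sum_mulVec, dotProduct_sum, smul_mulVec, dotProduct_smul]
  refine Finset.sum_congr rfl fun i _ => ?_
  rw [smul_eq_mul, mul_comm, RingHom.map_dotProduct]
  congr 2
  funext j
  exact (RingHom.map_mulVec C _ v j).symm

theorem dotProduct_pow_mulVec_eq_zero_of_isNilpotent_add_vecMulVec [IsReduced R]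
    {A : Matrix n n R} {u v : n → R} (hA : IsNilpotent A)
    (hB : IsNilpotent (A + vecMulVec v u)) (k : ℕ) : u ⬝ᵥ (A ^ k *ᵥ v) = 0 := by
  have hdetA : (1 - (X : R[X]) • A.map C).det = 1 := charpolyRev_eq_one_of_isNilpotent hA
  have hsplit : 1 - (X : R[X]) • (A + vecMulVec v u).map C
      = (1 - (X : R[X]) • A.map C) + vecMulVec (-((X : R[X]) • (C ∘ v))) (C ∘ u) := by
    refine Matrix.ext fun i j => ?_
    simp only [sub_apply, smul_apply, map_apply, add_apply, neg_vecMulVec, smul_vecMulVec,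
      neg_apply, vecMulVec_apply, map_add, map_mul, smul_eq_mul, Function.comp_apply]
    ring
  have key : (C ∘ u) ⬝ᵥ (1 - (X : R[X]) • A.map C)⁻¹ *ᵥ (C ∘ v) = 0 := by
    have h := charpolyRev_eq_one_of_isNilpotent hB
    rw [charpolyRev, hsplit, det_add_vecMulVec (by rw [hdetA]; exact isUnit_one), hdetA,
      mulVec_neg, mulVec_smul, dotProduct_neg, dotProduct_smul] at h
    refine isRegular_X.left (?_ : X * _ = X * 0)
    rw [smul_eq_mul] at h
    linear_combination -h
  obtain ⟨m, hm⟩ := hA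
  rw [inv_one_sub_X_smul_map_C hm, dotProduct_sum_X_pow_smul_map_C_mulVec] at key
  rcases lt_or_ge k m with hk | hk
  · simpa [finsetSum_coeff, coeff_C_mul_X_pow, hk] using congrArg (coeff · k) key
  · simp [pow_eq_zero_of_le hk hm]

end Matrix

/-- Let `A` be a nilpotent `n × n` complex matrix (indexed by `Fin (n+1)`),
`v ∈ ℂⁿ` a column vector, and suppose `B = A + v eₙᵀ` is also nilpotent, where
`eₙ = Pi.single (Fin.last n) 1` is the last standard basis vector, so that
`v eₙᵀ = Matrix.vecMulVec v eₙ`.  Then `eₙᵀ Aⁱ v = ((Aⁱ) v) (Fin.last n) = 0`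
for every `i ≥ 0`. -/
theorem stmt_1 (n : ℕ) (A : Matrix (Fin (n + 1)) (Fin (n + 1)) ℂ)
    (v : Fin (n + 1) → ℂ)
    (hA : IsNilpotent A)
    (hB : IsNilpotent (A + Matrix.vecMulVec v (Pi.single (Fin.last n) 1))) :
    ∀ i : ℕ, Matrix.mulVec (A ^ i) v (Fin.last n) = 0 := fun i => by
  simpa using
    Matrix.dotProduct_pow_mulVec_eq_zero_of_isNilpotent_add_vecMulVec hA hB i
end

section
/- Let A be an n×n complex matrix, v ∈ ℂⁿ a column vector, and k ≥ 1 an integer. Suppose A^k = 0, (A + v eₙᵀ)^k = 0, and A + v eₙᵀ is nilpotent. Then ∑_{j=0}^{k−1} A^j (v eₙᵀ) A^{k−1−j} = 0. -/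
/-!
Write `E = v wᵀ`. Since `E M E = (wᵀ M v) E`, once the scalars `wᵀ Aⁱ v` vanish every word
in `A` and `E` containing `E` twice is zero, so `(A + E)ᴺ = Aᴺ + ∑ⱼ Aʲ E Aᴺ⁻¹⁻ʲ`.
The scalars do vanish when `A` and `A + E` are nilpotent: by induction on `m`, the expansion
for `N = m + 1` holds, and taking traces gives `0 = 0 + (m + 1) wᵀ Aᵐ v`, since nilpotent
matrices have traceless powers. For `N = k` the expansion then reads `0 = 0 + ∑ⱼ Aʲ E Aᵏ⁻¹⁻ʲ`.
-/

open Matrix Finset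

section

variable {ι : Type*} [Fintype ι]

theorem Matrix.vecMulVec_mul_mul_vecMulVec_eq_zero {R : Type*} [Semiring R]
    {v w : ι → R} {M : Matrix ι ι R} (h : w ⬝ᵥ M *ᵥ v = 0) :
    vecMulVec v w * M * vecMulVec v w = 0 := by
  rw [vecMulVec_mul, vecMulVec_mul_vecMulVec, ← dotProduct_mulVec, h, zero_smul,
    vecMulVec_zero]

theorem Matrix.trace_vecMulVec_mul {R : Type*} [CommSemiring R] (v w : ι → R)
    (M : Matrix ι ι R) : trace (vecMulVec v w * M) = w ⬝ᵥ M *ᵥ v := by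
  rw [vecMulVec_mul, trace_vecMulVec, dotProduct_comm, dotProduct_mulVec]

theorem Matrix.trace_pow_mul_mul_pow {R : Type*} [CommSemiring R] [DecidableEq ι]
    (A B : Matrix ι ι R) (i j : ℕ) : trace (A ^ i * B * A ^ j) = trace (B * A ^ (i + j)) := by
  rw [trace_mul_comm, ← Matrix.mul_assoc, ← pow_add, add_comm, trace_mul_comm]

theorem Matrix.add_vecMulVec_pow {R : Type*} [Semiring R] [DecidableEq ι]
    {A : Matrix ι ι R} {v w : ι → R} (N : ℕ)
    (h : ∀ i, i + 1 < N → w ⬝ᵥ A ^ i *ᵥ v = 0) :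
    (A + vecMulVec v w) ^ N
      = A ^ N + ∑ j ∈ range N, A ^ j * vecMulVec v w * A ^ (N - 1 - j) := by
  induction N with
  | zero => simp
  | succ N ih =>
    set E := vecMulVec v w
    have hEE : E * ∑ j ∈ range N, A ^ j * E * A ^ (N - 1 - j) = 0 := by
      rw [Finset.mul_sum]
      refine Finset.sum_eq_zero fun j hj => ?_
      have hEAE : E * A ^ j * E = 0 :=
        vecMulVec_mul_mul_vecMulVec_eq_zero (h j (by simp at hj; omega))
      simp only [← Matrix.mul_assoc, hEAE, Matrix.zero_mul]
    have hAS : A * ∑ j ∈ range N, A ^ j * E * A ^ (N - 1 - j)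
        = ∑ j ∈ range N, A ^ (j + 1) * E * A ^ (N + 1 - 1 - (j + 1)) := by
      rw [Finset.mul_sum]
      refine Finset.sum_congr rfl fun j _ => ?_
      rw [← Matrix.mul_assoc, ← Matrix.mul_assoc, ← pow_succ', Nat.add_sub_cancel,
        Nat.sub_add_eq, Nat.sub_right_comm]
    rw [pow_succ', ih fun i hi => h i (by omega), add_mul, mul_add, mul_add, hEE, hAS,
      ← pow_succ', sum_range_succ' _ N, pow_zero, Matrix.one_mul, Nat.add_sub_cancel,
      Nat.sub_zero]
    abel

theorem Matrix.dotProduct_pow_mulVec_eq_zero_of_isNilpotent {K : Type*} [Field K] [CharZero K]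
    [DecidableEq ι] {A : Matrix ι ι K} {v w : ι → K} (hA : IsNilpotent A)
    (hB : IsNilpotent (A + vecMulVec v w)) (m : ℕ) : w ⬝ᵥ A ^ m *ᵥ v = 0 := by
  induction m using Nat.strong_induction_on with
  | _ m ih =>
    have htrace := congrArg trace (add_vecMulVec_pow (m + 1) fun i hi => ih i (by omega))
    have hterm : ∀ j ∈ range (m + 1),
        trace (A ^ j * vecMulVec v w * A ^ (m + 1 - 1 - j)) = w ⬝ᵥ A ^ m *ᵥ v := by
      intro j hj
      rw [trace_pow_mul_mul_pow, trace_vecMulVec_mul]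
      congr 3
      simp at hj
      omega
    rw [trace_add, trace_sum, sum_congr rfl hterm, sum_const, card_range,
      (isNilpotent_trace_of_isNilpotent (hA.pow_succ m)).eq_zero,
      (isNilpotent_trace_of_isNilpotent (hB.pow_succ m)).eq_zero, zero_add, eq_comm,
      smul_eq_zero] at htrace
    exact htrace.resolve_left m.succ_ne_zero

end

theorem stmt_2_general (n k : ℕ)
    (A : Matrix (Fin (n + 1)) (Fin (n + 1)) ℂ) (v : Fin (n + 1) → ℂ)
    (hA : A ^ k = 0)
    (hBk : (A + Matrix.vecMulVec v (Pi.single (Fin.last n) 1)) ^ k = 0) :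
    ∑ j ∈ Finset.range k,
      A ^ j * Matrix.vecMulVec v (Pi.single (Fin.last n) 1) * A ^ (k - 1 - j) = 0 := by
  have hvanish := dotProduct_pow_mulVec_eq_zero_of_isNilpotent ⟨k, hA⟩ ⟨k, hBk⟩
  have hexpand := add_vecMulVec_pow k fun i _ => hvanish i
  rw [hBk, hA, zero_add] at hexpand
  exact hexpand.symm

/-- Let `A` be an `n × n` complex matrix (indexed by `Fin (n+1)`),
`v` a column vector, and `k ≥ 1`.  Suppose `A ^ k = 0`, `(A + v eₙᵀ) ^ k = 0` and
`A + v eₙᵀ` is nilpotent, where `v eₙᵀ = Matrix.vecMulVec v (Pi.single (Fin.last n) 1)`.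
Then `∑_{j=0}^{k-1} A^j (v eₙᵀ) A^{k-1-j} = 0`. -/
theorem stmt_2 (n k : ℕ) (hk : 1 ≤ k)
    (A : Matrix (Fin (n + 1)) (Fin (n + 1)) ℂ) (v : Fin (n + 1) → ℂ)
    (hA : A ^ k = 0)
    (hBk : (A + Matrix.vecMulVec v (Pi.single (Fin.last n) 1)) ^ k = 0)
    (hB : IsNilpotent (A + Matrix.vecMulVec v (Pi.single (Fin.last n) 1))) :
    ∑ j ∈ Finset.range k,
      A ^ j * Matrix.vecMulVec v (Pi.single (Fin.last n) 1) * A ^ (k - 1 - j) = 0 :=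
  stmt_2_general n k A v hA hBk
end

section
/- Let d ≥ 1, let μ = (μ₁ ≥ … ≥ μ_l) be a partition of n−d, let α = (d, μ₁, …, μ_l), and let β be the nonincreasing rearrangement of α. Then n² − ∑_j ((βᵗ)_j)² ≥ [(n−d)² − ∑_j ((μᵗ)_j)²] + (2n−d)(d−1), and equality holds if and only if α is a partition, i.e. if and only if d ≥ μ₁. Equivalently, dim 𝒪_{(d,μ)} ≥ dim 𝒪_μ + (2n−d)(d−1) with equality iff (d,μ) is a partition, where dim 𝒪_λ = n² − ∑_j ((λᵗ)_j)² for a partition λ of n. -/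
/-!
Prepending the part `d` to `μ` raises each of the first `d` columns of the transpose by one, so
`∑ⱼ (βᵗ)ⱼ² = ∑ⱼ (μᵗ)ⱼ² + 2 S + d` with `S = ∑_{j ≤ d} (μᵗ)ⱼ = ∑ᵢ min μᵢ d`. Substituting, the
difference of the two sides of the inequality is `2 (|μ| - S) = 2 ∑ᵢ (μᵢ - min μᵢ d) ≥ 0`, which
vanishes exactly when no part of `μ` exceeds `d`.
-/

/-- The `j`-th part of the transpose (conjugate) partition of (the nonincreasing
rearrangement of) a composition `l`: `#{i : lᵢ ≥ j}` (invariant under rearrangement). -/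
def conjPart (l : List ℕ) (j : ℕ) : ℕ := (l.filter (fun a => decide (j ≤ a))).length

open Finset

lemma conjPart_cons (a : ℕ) (l : List ℕ) (j : ℕ) :
    conjPart (a :: l) j = conjPart l j + if j ≤ a then 1 else 0 := by
  by_cases h : j ≤ a <;> simp [conjPart, h]

lemma Icc_one_filter_le (a m : ℕ) : (Icc 1 m).filter (· ≤ a) = Icc 1 (min a m) := by
  ext j
  simp only [mem_filter, mem_Icc]
  omega

lemma sum_conjPart_Icc (l : List ℕ) (m : ℕ) :
    ∑ j ∈ Icc 1 m, conjPart l j = (l.map (min · m)).sum := by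
  induction l with
  | nil => simp [conjPart]
  | cons a l ih =>
    simp only [conjPart_cons, sum_add_distrib, ih, ← sum_filter, Icc_one_filter_le, List.map_cons,
      List.sum_cons, sum_const, Nat.card_Icc, smul_eq_mul, mul_one]
    omega

lemma sum_sq_conjPart_cons (a : ℕ) (l : List ℕ) (m : ℕ) (ha : a ≤ m) :
    ∑ j ∈ Icc 1 m, conjPart (a :: l) j ^ 2
      = ∑ j ∈ Icc 1 m, conjPart l j ^ 2 + 2 * ∑ j ∈ Icc 1 a, conjPart l j + a := by
  have hsq : ∀ j, conjPart (a :: l) j ^ 2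
      = conjPart l j ^ 2 + if j ≤ a then 2 * conjPart l j + 1 else 0 := by
    intro j
    rw [conjPart_cons]
    split_ifs <;> ring
  simp only [hsq, sum_add_distrib, ← sum_filter, Icc_one_filter_le, min_eq_left ha, mul_sum,
    sum_const, Nat.card_Icc, smul_eq_mul, mul_one, Nat.add_sub_cancel, add_assoc]

lemma List.sum_map_min_le_sum (l : List ℕ) (m : ℕ) : (l.map (min · m)).sum ≤ l.sum := by
  induction l with
  | nil => simp
  | cons a l ih => simp only [List.map_cons, List.sum_cons]; omega

lemma List.sum_map_min_eq_sum_iff (l : List ℕ) (m : ℕ) :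
    (l.map (min · m)).sum = l.sum ↔ ∀ a ∈ l, a ≤ m := by
  induction l with
  | nil => simp
  | cons a l ih =>
    have := l.sum_map_min_le_sum m
    simp only [List.map_cons, List.sum_cons, List.forall_mem_cons, ← ih]
    omega

lemma List.headD_zero_le_iff {l : List ℕ} (hl : l.Pairwise (· ≥ ·)) (d : ℕ) :
    l.headD 0 ≤ d ↔ ∀ a ∈ l, a ≤ d := by
  cases l with
  | nil => simp
  | cons x l =>
    rw [List.pairwise_cons] at hl
    simp only [List.headD_cons, List.forall_mem_cons]
    exact ⟨fun hx => ⟨hx, fun a ha => (hl.1 a ha).trans hx⟩, And.left⟩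

theorem stmt_6_general (n d : ℕ) (hdn : d ≤ n) (μ : List ℕ)
    (hsort : μ.Pairwise (· ≥ ·)) (hsum : μ.sum = n - d) :
    ((n : ℤ) ^ 2 - ∑ j ∈ Finset.Icc 1 n, (conjPart (d :: μ) j : ℤ) ^ 2
        ≥ ((n - d : ℕ) : ℤ) ^ 2 - ∑ j ∈ Finset.Icc 1 n, (conjPart μ j : ℤ) ^ 2
          + (2 * (n : ℤ) - d) * ((d : ℤ) - 1))
    ∧ ((n : ℤ) ^ 2 - ∑ j ∈ Finset.Icc 1 n, (conjPart (d :: μ) j : ℤ) ^ 2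
        = ((n - d : ℕ) : ℤ) ^ 2 - ∑ j ∈ Finset.Icc 1 n, (conjPart μ j : ℤ) ^ 2
          + (2 * (n : ℤ) - d) * ((d : ℤ) - 1)
      ↔ μ.headD 0 ≤ d) := by
  set S := ∑ j ∈ Icc 1 d, conjPart μ j with hS
  rw [sum_conjPart_Icc] at hS
  have hSle : S ≤ n - d := hS ▸ hsum ▸ μ.sum_map_min_le_sum d
  have hcols : ∑ j ∈ Icc 1 n, (conjPart (d :: μ) j : ℤ) ^ 2
      = ∑ j ∈ Icc 1 n, (conjPart μ j : ℤ) ^ 2 + 2 * S + d := by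
    exact_mod_cast sum_sq_conjPart_cons d μ n hdn
  have hgap : (n : ℤ) ^ 2 - ∑ j ∈ Icc 1 n, (conjPart (d :: μ) j : ℤ) ^ 2
      = ((n - d : ℕ) : ℤ) ^ 2 - ∑ j ∈ Icc 1 n, (conjPart μ j : ℤ) ^ 2
        + (2 * (n : ℤ) - d) * ((d : ℤ) - 1) + 2 * (((n - d : ℕ) : ℤ) - S) := by
    rw [hcols]
    push_cast [Nat.cast_sub hdn]
    ring
  rw [hgap, μ.headD_zero_le_iff hsort, ← μ.sum_map_min_eq_sum_iff, ← hS, hsum]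
  omega

/-- Let `d ≥ 1`, let `μ = (μ₁ ≥ … ≥ μ_l)` be a partition of `n − d`,
and let `α = (d, μ₁, …, μ_l)` with nonincreasing rearrangement `β`.  Then
`n² − ∑_j ((βᵗ)_j)² ≥ (n−d)² − ∑_j ((μᵗ)_j)² + (2n−d)(d−1)`, with equality if and only
if `α` is a partition, i.e. iff `d ≥ μ₁`.  (Equivalently
`dim 𝒪_{(d,μ)} ≥ dim 𝒪_μ + (2n−d)(d−1)` with equality iff `(d,μ)` is a partition.)
The transpose parts of `β` are computed directly from the composition `d :: μ`, since
they are invariant under rearrangement. -/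
theorem stmt_6 (n d : ℕ) (hd : 1 ≤ d) (hdn : d ≤ n) (μ : List ℕ)
    (hpos : ∀ x ∈ μ, 0 < x) (hsort : μ.Pairwise (· ≥ ·)) (hsum : μ.sum = n - d) :
    ((n : ℤ) ^ 2 - ∑ j ∈ Finset.Icc 1 n, (conjPart (d :: μ) j : ℤ) ^ 2
        ≥ ((n - d : ℕ) : ℤ) ^ 2 - ∑ j ∈ Finset.Icc 1 n, (conjPart μ j : ℤ) ^ 2
          + (2 * (n : ℤ) - d) * ((d : ℤ) - 1))
    ∧ ((n : ℤ) ^ 2 - ∑ j ∈ Finset.Icc 1 n, (conjPart (d :: μ) j : ℤ) ^ 2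
        = ((n - d : ℕ) : ℤ) ^ 2 - ∑ j ∈ Finset.Icc 1 n, (conjPart μ j : ℤ) ^ 2
          + (2 * (n : ℤ) - d) * ((d : ℤ) - 1)
      ↔ μ.headD 0 ≤ d) :=
  stmt_6_general n d hdn μ hsort hsum
end

section
/- For an integer m ≥ 0 and a real number c, let S(m,c) denote the multiset {c + (m+1)/2 − j : j = 1,…,m} of reals (an arithmetic progression of length m, mean c and common difference 1; S(0,c) is empty). Let m ≥ 1 and k ≥ 1 be integers with k ≠ m, and let 0 < s < 1/2. Let B be the multiset obtained by adding 1/2 to every element of S(m, k/2+s) ⊔ S(m, k/2−s) ⊔ S(m, −k/2+s) ⊔ S(m, −k/2−s), and let ξ′ = S(m−1, k/2+s) ⊔ S(m−1, k/2−s) ⊔ S(m−1, −k/2+s) ⊔ S(m−1, −k/2−s). Then ξ′ is a submultiset of B, ξ′ is symmetric, and ξ′ is the unique symmetric submultiset of B of cardinality 4(m−1). -/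
/-!
Adding `1/2` to `S(n+1, c)` gives `S(n, c)` together with the new top element `c + (n+1)/2`.
Hence, for the multiset `C` of the four centres `±k/2 ± s`, `B = D + ξ'` with
`D = {c + m/2 : c ∈ C}`, and `ξ'` is symmetric because `C` is. If no two elements of `D` sum to
zero, then a symmetric `T ≤ B` satisfies `T ≤ ξ'`: writing `#x` for multiplicities, for `x ∈ D`
we have `#x T = #(-x) T ≤ #(-x) B = #(-x) ξ' = #x ξ'`. Comparing cardinalities gives `T = ξ'`.
Two elements of `D` sum to `m + εk + 2δs` with `ε, δ ∈ {-1, 0, 1}`; since `0 < 2s < 1` this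
vanishes only for `δ = 0`, `ε = -1` and `k = m`.
-/

/-- The multiset `S(m,c) = {c + (m+1)/2 − j : j = 1,…,m}` of reals: an arithmetic
progression of length `m`, mean `c` and common difference `1` (`S(0,c)` is empty). -/
noncomputable def seg (m : ℕ) (c : ℝ) : Multiset ℝ :=
  (Multiset.range m).map (fun j => c + ((m : ℝ) + 1) / 2 - ((j : ℝ) + 1))

/-- The multiplicity of `x` in a multiset of reals (using classical decidability). -/
noncomputable def mcount (x : ℝ) (T : Multiset ℝ) : ℕ :=
  @Multiset.count ℝ (Classical.decEq ℝ) x T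

/-- A multiset of reals is symmetric if every `x` occurs with the same multiplicity
as `−x`. -/
def IsSymmetric (T : Multiset ℝ) : Prop := ∀ x : ℝ, mcount x T = mcount (-x) T

/- The cast `(j : ℝ)` in `seg` makes Lean coerce the multiset `range m` to `Multiset ℝ` through
the multiset monad; this restores the intended form. -/
theorem seg_eq_map_range (n : ℕ) (c : ℝ) :
    seg n c = (Multiset.range n).map (fun j : ℕ => c + ((n : ℝ) + 1) / 2 - ((j : ℝ) + 1)) := by
  simp only [seg, Multiset.pure_def, Multiset.bind_def, Multiset.bind_singleton, Multiset.map_map,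
    Function.comp_apply]

theorem card_seg (n : ℕ) (c : ℝ) : Multiset.card (seg n c) = n := by
  simp [seg_eq_map_range]

theorem map_add_seg (n : ℕ) (c a : ℝ) : (seg n c).map (· + a) = seg n (c + a) := by
  simp only [seg_eq_map_range, Multiset.map_map]
  exact Multiset.map_congr rfl fun j _ => by simp only [Function.comp_apply]; ring

theorem seg_succ_eq_cons_min (n : ℕ) (c : ℝ) :
    seg (n + 1) c = (c - n / 2) ::ₘ seg n (c + 1 / 2) := by
  simp only [seg_eq_map_range, Multiset.range_succ, Multiset.map_cons]
  congr 1
  · push_cast; ring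
  · exact Multiset.map_congr rfl fun j _ => by push_cast; ring

theorem seg_succ_eq_cons_max (n : ℕ) (c : ℝ) :
    seg (n + 1) c = (c + n / 2) ::ₘ seg n (c - 1 / 2) := by
  rw [seg_eq_map_range, seg_eq_map_range, add_comm n 1, Multiset.range_add, Multiset.map_add,
    Multiset.map_map, Multiset.range_succ, Multiset.range_zero, Multiset.map_cons,
    Multiset.map_zero, Multiset.cons_add, zero_add]
  congr 1
  · push_cast; ring
  · exact Multiset.map_congr rfl fun j _ => by simp only [Function.comp_apply]; push_cast; ring

theorem map_neg_seg (n : ℕ) (c : ℝ) : (seg n c).map Neg.neg = seg n (-c) := by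
  induction n generalizing c with
  | zero => simp [seg_eq_map_range]
  | succ n ih =>
    rw [seg_succ_eq_cons_max, Multiset.map_cons, ih, seg_succ_eq_cons_min]
    congr 2 <;> ring

theorem mcount_eq_count (x : ℝ) (T : Multiset ℝ) : mcount x T = T.count x := by
  unfold mcount
  congr

theorem isSymmetric_of_map_neg_eq {T : Multiset ℝ} (hT : T.map Neg.neg = T) :
    IsSymmetric T := by
  intro x
  simpa [mcount_eq_count, hT] using Multiset.count_map_eq_count' Neg.neg T neg_injective (-x)

theorem IsSymmetric.count_neg {T : Multiset ℝ} (hT : IsSymmetric T) (x : ℝ) :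
    T.count (-x) = T.count x := by
  rw [← mcount_eq_count, ← mcount_eq_count, hT x]

theorem IsSymmetric.le_of_le_add {D ξ T : Multiset ℝ} (hT : IsSymmetric T)
    (hξ : IsSymmetric ξ) (hD : ∀ x ∈ D, -x ∉ D) (hTB : T ≤ D + ξ) : T ≤ ξ := by
  have hcount (y : ℝ) (hy : y ∉ D) : T.count y ≤ ξ.count y := by
    simpa [Multiset.count_eq_zero_of_notMem hy] using Multiset.count_le_of_le y hTB
  rw [Multiset.le_iff_count]
  intro x
  by_cases hx : x ∈ D
  · calc T.count x = T.count (-x) := (hT.count_neg x).symm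
      _ ≤ ξ.count (-x) := hcount (-x) (hD x hx)
      _ = ξ.count x := hξ.count_neg x
  · exact hcount x hx

theorem map_add_half_bind_seg_succ (C : Multiset ℝ) (n : ℕ) :
    (C.bind (seg (n + 1))).map (· + 1 / 2) = C.map (· + ((n : ℝ) + 1) / 2) + C.bind (seg n) := by
  have hshift (c : ℝ) : (seg (n + 1) c).map (· + 1 / 2) = {c + ((n : ℝ) + 1) / 2} + seg n c := by
    rw [map_add_seg, seg_succ_eq_cons_max, Multiset.singleton_add]
    congr 1
    · ring
    · congr 1; ring
  simp only [Multiset.map_bind, hshift, Multiset.bind_add, Multiset.bind_singleton]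

theorem map_neg_bind_seg {C : Multiset ℝ} (hC : C.map Neg.neg = C) (n : ℕ) :
    (C.bind (seg n)).map Neg.neg = C.bind (seg n) := by
  conv_rhs => rw [← hC]
  simp only [Multiset.map_bind, map_neg_seg, Multiset.bind_map]

theorem card_bind_seg (C : Multiset ℝ) (n : ℕ) :
    Multiset.card (C.bind (seg n)) = Multiset.card C * n := by
  simp [Multiset.card_bind, card_seg]

theorem eq_bind_seg_of_isSymmetric {C : Multiset ℝ} {n : ℕ} (hC : C.map Neg.neg = C)
    (hCC : ∀ c ∈ C, ∀ c' ∈ C, c + c' + ((n : ℝ) + 1) ≠ 0) {T : Multiset ℝ}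
    (hTB : T ≤ (C.bind (seg (n + 1))).map (· + 1 / 2)) (hT : IsSymmetric T)
    (hTcard : Multiset.card T = Multiset.card C * n) : T = C.bind (seg n) := by
  rw [map_add_half_bind_seg_succ] at hTB
  have hD : ∀ x ∈ C.map (· + ((n : ℝ) + 1) / 2), -x ∉ C.map (· + ((n : ℝ) + 1) / 2) := by
    simp only [Multiset.mem_map, forall_exists_index, and_imp, forall_apply_eq_imp_iff₂, not_exists, not_and]
    intro c hc c' hc' h
    exact hCC c hc c' hc' (by linarith)
  refine Multiset.eq_of_le_of_card_le ?_ (by rw [hTcard, card_bind_seg])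
  exact hT.le_of_le_add (isSymmetric_of_map_neg_eq (map_neg_bind_seg hC n)) hD hTB

def centres (a s : ℝ) : Multiset ℝ := {a + s, a - s, -a + s, -a - s}

theorem map_neg_centres (a s : ℝ) : (centres a s).map Neg.neg = centres a s := by
  simp only [centres, Multiset.insert_eq_cons, Multiset.map_cons, Multiset.map_singleton]
  rw [show -(a + s) = -a - s by ring, show -(a - s) = -a + s by ring,
    show -(-a + s) = a - s by ring, show -(-a - s) = a + s by ring]
  exact Multiset.coe_reverse [a + s, a - s, -a + s, -a - s]

theorem card_centres (a s : ℝ) : Multiset.card (centres a s) = 4 := rfl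

theorem centres_add_add_ne_zero {k n : ℕ} (hkn : k ≠ n + 1) {s : ℝ} (hs0 : 0 < s)
    (hs1 : s < 1 / 2) :
    ∀ c ∈ centres ((k : ℝ) / 2) s, ∀ c' ∈ centres ((k : ℝ) / 2) s, c + c' + ((n : ℝ) + 1) ≠ 0 := by
  have hk : (0 : ℝ) ≤ k := k.cast_nonneg
  have hkn : (k : ℝ) ≤ n ∨ (n : ℝ) + 2 ≤ k := by
    rcases Nat.lt_or_ge k (n + 1) with h | h
    · left; exact_mod_cast Nat.lt_succ_iff.mp h
    · right; exact_mod_cast (show n + 2 ≤ k by omega)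
  simp only [centres, Multiset.insert_eq_cons, Multiset.mem_cons, Multiset.mem_singleton]
  rintro c (rfl | rfl | rfl | rfl) c' (rfl | rfl | rfl | rfl) <;> rcases hkn with h | h <;>
    intro <;> linarith

theorem stmt_11_general (m k : ℕ) (hm : 1 ≤ m) (hkm : k ≠ m)
    (s : ℝ) (hs0 : 0 < s) (hs1 : s < 1 / 2) :
    let B : Multiset ℝ :=
      (seg m ((k : ℝ) / 2 + s) + seg m ((k : ℝ) / 2 - s)
        + seg m (-(k : ℝ) / 2 + s) + seg m (-(k : ℝ) / 2 - s)).map (fun x => x + 1 / 2)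
    let ξ' : Multiset ℝ :=
      seg (m - 1) ((k : ℝ) / 2 + s) + seg (m - 1) ((k : ℝ) / 2 - s)
        + seg (m - 1) (-(k : ℝ) / 2 + s) + seg (m - 1) (-(k : ℝ) / 2 - s)
    ξ' ≤ B ∧ IsSymmetric ξ' ∧ Multiset.card ξ' = 4 * (m - 1)
      ∧ ∀ T : Multiset ℝ, T ≤ B → IsSymmetric T → Multiset.card T = 4 * (m - 1) → T = ξ' := by
  intro B ξ'
  obtain ⟨n, rfl⟩ : ∃ n, m = n + 1 := ⟨m - 1, by omega⟩
  set C := centres ((k : ℝ) / 2) s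
  have hB : B = (C.bind (seg (n + 1))).map (· + 1 / 2) := by
    simp [B, C, centres, Multiset.cons_bind, add_assoc, neg_div]
  have hξ' : ξ' = C.bind (seg n) := by
    simp [ξ', C, centres, Multiset.cons_bind, add_assoc, neg_div]
  have hcard : Multiset.card C * n = 4 * (n + 1 - 1) := by rw [card_centres]; omega
  have hC := map_neg_centres ((k : ℝ) / 2) s
  rw [hB, hξ', ← hcard]
  refine ⟨?_, isSymmetric_of_map_neg_eq (map_neg_bind_seg hC n), card_bind_seg C n, ?_⟩
  · rw [map_add_half_bind_seg_succ]
    exact Multiset.le_add_left _ _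
  · intro T hTB hT hTcard
    exact eq_bind_seg_of_isSymmetric hC (centres_add_add_ne_zero hkm hs0 hs1) hTB hT hTcard

/-- Let `m, k ≥ 1` with `k ≠ m` and `0 < s < 1/2`.  Let `B` be the
multiset obtained by adding `1/2` to every element of
`S(m, k/2+s) ⊔ S(m, k/2−s) ⊔ S(m, −k/2+s) ⊔ S(m, −k/2−s)`, and let
`ξ′ = S(m−1, k/2+s) ⊔ S(m−1, k/2−s) ⊔ S(m−1, −k/2+s) ⊔ S(m−1, −k/2−s)`.
Then `ξ′` is a symmetric submultiset of `B` of cardinality `4(m−1)`, and it is the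
unique such: any symmetric submultiset of `B` of cardinality `4(m−1)` equals `ξ′`. -/
theorem stmt_11 (m k : ℕ) (hm : 1 ≤ m) (hk : 1 ≤ k) (hkm : k ≠ m)
    (s : ℝ) (hs0 : 0 < s) (hs1 : s < 1 / 2) :
    let B : Multiset ℝ :=
      (seg m ((k : ℝ) / 2 + s) + seg m ((k : ℝ) / 2 - s)
        + seg m (-(k : ℝ) / 2 + s) + seg m (-(k : ℝ) / 2 - s)).map (fun x => x + 1 / 2)
    let ξ' : Multiset ℝ :=
      seg (m - 1) ((k : ℝ) / 2 + s) + seg (m - 1) ((k : ℝ) / 2 - s)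
        + seg (m - 1) (-(k : ℝ) / 2 + s) + seg (m - 1) (-(k : ℝ) / 2 - s)
    ξ' ≤ B ∧ IsSymmetric ξ' ∧ Multiset.card ξ' = 4 * (m - 1)
      ∧ ∀ T : Multiset ℝ, T ≤ B → IsSymmetric T → Multiset.card T = 4 * (m - 1) → T = ξ' :=
  stmt_11_general m k hm hkm s hs0 hs1
end
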